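/- arXiv:1302.2433 — 2 statements merged into one kernel-verified Lean document; each statement's English description precedes it below -/
import Mathlib

section
/- Let (X, d) be a compact metric space, let T : X → X be a bijection such that both T and T⁻¹ are Lipschitz, and let μ be a T-invariant ergodic Borel probability measure on X. Then the lower local dimension d_μ is μ-almost everywhere constant: there exists c ∈ [0, +∞] such that μ({x ∈ X : d_μ(x) = c}) = 1. -/
open MeasureTheory Filter Set Metric
open scoped ENNReal NNReal Topology

/-- Lower local dimension of a measure at a point (real-valued liminf). -/
noncomputable def locDim {X : Type*} [MetricSpace X] [MeasurableSpace X]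
    (μ : Measure X) (x : X) : ℝ :=
  liminf (fun r : ℝ => Real.log (μ (ball x r)).toReal / Real.log r)
    (nhdsWithin 0 (Ioi 0))

/-- Topological support of a measure on a metric space. -/
def msupp {X : Type*} [MetricSpace X] [MeasurableSpace X] (μ : Measure X) : Set X :=
  {x | ∀ r > 0, 0 < μ (ball x r)}

/-- Lower local dimension, with the quotient interpreted in the extended reals
(`ENNReal.log` of the mass of the ball, divided by the log of the radius). -/
noncomputable def locDimE {X : Type*} [MetricSpace X] [MeasurableSpace X]
    (μ : Measure X) (x : X) : EReal :=
  liminf (fun r : ℝ => ENNReal.log (μ (ball x r)) / (Real.log r : EReal))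
    (nhdsWithin 0 (Ioi 0))

namespace Statement10Aux

/-! ### EReal division helpers -/

lemma ediv_eq_div_mul (a : EReal) {b c : ℝ} (hb : b < 0) (hc : c < 0) :
    a / (c : EReal) = a / (b : EReal) * ((b / c : ℝ) : EReal) := by
  have hbc : (0:ℝ) < b / c := by rw [div_pos_iff]; exact Or.inr ⟨hb, hc⟩
  induction a using EReal.rec with
  | bot =>
      rw [EReal.bot_div_of_neg_ne_bot (by exact_mod_cast hc) (by simp),
        EReal.bot_div_of_neg_ne_bot (by exact_mod_cast hb) (by simp),
        EReal.top_mul_coe_of_pos hbc]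
  | coe a =>
      rw [← EReal.coe_div, ← EReal.coe_div, ← EReal.coe_mul, EReal.coe_eq_coe_iff,
        div_mul_div_comm, mul_comm a b, mul_div_mul_left a c (ne_of_lt hb)]
  | top =>
      rw [EReal.top_div_of_neg_ne_bot (by exact_mod_cast hc) (by simp),
        EReal.top_div_of_neg_ne_bot (by exact_mod_cast hb) (by simp),
        EReal.bot_mul_coe_of_pos hbc]

lemma ediv_le_ediv_denom {a : EReal} (ha : a ≤ 0) {b c : ℝ} (hbc : b ≤ c) (hc : c < 0) :
    a / (b : EReal) ≤ a / (c : EReal) := by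
  have hb : b < 0 := lt_of_le_of_lt hbc hc
  rw [ediv_eq_div_mul a hc hb]
  have h1 : (0:EReal) ≤ a / (c : EReal) :=
    EReal.div_nonneg_of_nonpos_of_nonpos ha (by exact_mod_cast hc.le)
  have h2 : (c / b : ℝ) ≤ 1 := by
    rw [div_le_one_iff]
    exact Or.inr (Or.inr ⟨hb, hbc⟩)
  calc a / (c : EReal) * ((c / b : ℝ) : EReal)
      ≤ a / (c : EReal) * ((1:ℝ) : EReal) :=
        mul_le_mul_of_nonneg_left (by exact_mod_cast h2) h1
    _ = a / (c : EReal) := by norm_num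

/-! ### scaling lemmas -/

lemma le_of_forall_mul_le {A L : EReal} (hL : 0 ≤ L)
    (h : ∀ c : ℝ, 1 < c → A ≤ (c : EReal) * L) : A ≤ L := by
  induction L using EReal.rec with
  | bot => exact absurd hL (by simp)
  | top => exact le_top
  | coe l =>
      have hl : 0 ≤ l := by exact_mod_cast hL
      rcases eq_or_lt_of_le hl with hl0 | hl0
      · have h2 := h 2 one_lt_two
        rw [← hl0, show ((0:ℝ):EReal) = 0 by norm_cast, mul_zero] at h2
        rw [← hl0]
        exact_mod_cast h2
      · by_contra hAL
        push_neg at hAL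
        obtain ⟨q, hq1, hq2⟩ := EReal.exists_between_coe_real hAL
        have hlq : l < q := by exact_mod_cast hq1
        have := h (q / l) ((one_lt_div hl0).2 hlq)
        rw [← EReal.coe_mul, div_mul_cancel₀ _ (ne_of_gt hl0)] at this
        exact absurd hq2 (not_lt.2 this)

lemma le_of_forall_lt_mul_le {A L : EReal} (hL : 0 ≤ L)
    (h : ∀ c : ℝ, 0 < c → c < 1 → (c : EReal) * L ≤ A) : L ≤ A := by
  induction L using EReal.rec with
  | bot => exact bot_le
  | top =>
      have := h (1/2) (by norm_num) (by norm_num)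
      rwa [EReal.coe_mul_top_of_pos (by norm_num), top_le_iff, ← top_le_iff] at this
  | coe l =>
      have hl : 0 ≤ l := by exact_mod_cast hL
      rcases eq_or_lt_of_le hl with hl0 | hl0
      · have h2 := h (1/2) (by norm_num) (by norm_num)
        rw [← hl0, show ((0:ℝ):EReal) = 0 by norm_cast, mul_zero] at h2
        rw [← hl0]
        exact_mod_cast h2
      · by_contra hAL
        push_neg at hAL
        have hA0 : (0:EReal) < A := by
          have := h (1/2) (by norm_num) (by norm_num)
          refine lt_of_lt_of_le ?_ this
          rw [← EReal.coe_mul]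
          exact_mod_cast (by positivity : (0:ℝ) < 1/2 * l)
        obtain ⟨q, hq1, hq2⟩ := EReal.exists_between_coe_real hAL
        have hql : q < l := by exact_mod_cast hq2
        have hq0 : 0 < q := by
          by_contra hq0'
          push_neg at hq0'
          exact absurd (hA0.trans hq1) (by exact_mod_cast not_lt.2 hq0' : ¬ ((0:EReal) < (q:EReal)))
        have := h (q / l) (by positivity) ((div_lt_one hl0).2 hql)
        rw [← EReal.coe_mul, div_mul_cancel₀ _ (ne_of_gt hl0)] at this
        exact absurd hq1 (not_lt.2 this)

private lemma emul_cancel {a b : ℝ} (ha : 0 < a) (hb : 0 < b) (hab : a * b = 1) (x : EReal) :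
    (a : EReal) * ((b : EReal) * x) = x := by
  induction x using EReal.rec with
  | bot => rw [EReal.coe_mul_bot_of_pos hb, EReal.coe_mul_bot_of_pos ha]
  | coe x => rw [← EReal.coe_mul, ← EReal.coe_mul, ← mul_assoc, hab, one_mul]
  | top => rw [EReal.coe_mul_top_of_pos hb, EReal.coe_mul_top_of_pos ha]

noncomputable def erealMulIso (c : ℝ) (hc : 0 < c) : EReal ≃o EReal where
  toFun x := (c : EReal) * x
  invFun x := ((c⁻¹ : ℝ) : EReal) * x
  left_inv x := emul_cancel (inv_pos.2 hc) hc (inv_mul_cancel₀ hc.ne') x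
  right_inv x := emul_cancel hc (inv_pos.2 hc) (mul_inv_cancel₀ hc.ne') x
  map_rel_iff' := by
    intro x y
    show (c : EReal) * x ≤ (c : EReal) * y ↔ x ≤ y
    constructor
    · intro h
      have h2 := mul_le_mul_of_nonneg_left h
        (by exact_mod_cast (inv_pos.2 hc).le : (0:EReal) ≤ ((c⁻¹ : ℝ) : EReal))
      rwa [emul_cancel (inv_pos.2 hc) hc (inv_mul_cancel₀ hc.ne'),
        emul_cancel (inv_pos.2 hc) hc (inv_mul_cancel₀ hc.ne')] at h2
    · intro h
      exact mul_le_mul_of_nonneg_left h (by exact_mod_cast hc.le : (0:EReal) ≤ (c : EReal))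

lemma liminf_const_mul {ι : Type*} (f : Filter ι) (u : ι → EReal) {c : ℝ} (hc : 0 < c) :
    liminf (fun i => (c : EReal) * u i) f = (c : EReal) * liminf u f :=
  ((erealMulIso c hc).liminf_apply).symm

lemma liminf_comp {ι κ : Type*} (f : Filter ι) (g : ι → κ) (u : κ → EReal) :
    liminf (fun i => u (g i)) f = liminf u (map g f) := by
  rw [liminf, liminf, map_map]
  rfl

/-! ### measurability of ball measure -/

lemma measurable_measure_ball' {X : Type*} [MetricSpace X] [MeasurableSpace X]
    [OpensMeasurableSpace X] (μ : Measure X) (r : ℝ) :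
    Measurable fun x => μ (ball x r) := by
  apply LowerSemicontinuous.measurable
  intro x c hc
  change c < μ (ball x r) at hc
  rcases le_or_gt r 0 with hr | hr
  · rw [ball_eq_empty.2 hr] at hc
    simp at hc
  · have hun : ball x r = ⋃ n : ℕ, ball x (r - r / (n + 1)) := by
      ext y
      simp only [mem_iUnion, mem_ball]
      constructor
      · intro hy
        have hε : 0 < r - dist y x := by linarith
        obtain ⟨n, hn⟩ := exists_nat_gt (r / (r - dist y x))
        refine ⟨n, ?_⟩
        rw [div_lt_iff₀ hε] at hn
        have h1 : r / (n + 1) < r - dist y x := by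
          rw [div_lt_iff₀ (by positivity)]
          nlinarith [dist_nonneg (x := y) (y := x)]
        linarith
      · rintro ⟨n, hn⟩
        have : 0 ≤ r / (n + 1) := by positivity
        linarith
    have hmono : Monotone fun n : ℕ => ball x (r - r / (n + 1)) := by
      intro m n hmn
      apply ball_subset_ball
      have h1 : (0:ℝ) < m + 1 := by positivity
      have h2 : (m:ℝ) + 1 ≤ (n:ℝ) + 1 := by exact_mod_cast by omega
      have := div_le_div_of_nonneg_left hr.le h1 h2
      linarith
    rw [hun, hmono.directed_le.measure_iUnion] at hc
    obtain ⟨n, hn⟩ := lt_iSup_iff.1 hc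
    have hδ : 0 < r / (n + 1) := by positivity
    filter_upwards [ball_mem_nhds x hδ] with y hy
    show c < μ (ball y r)
    refine hn.trans_le (measure_mono ?_)
    intro z hz
    rw [mem_ball] at hz hy ⊢
    have := dist_triangle z x y
    rw [dist_comm y x] at hy
    linarith

/-! ### the sequence version of locDimE -/

noncomputable def psi {X : Type*} [MetricSpace X] [MeasurableSpace X]
    (μ : Measure X) (x : X) (n : ℕ) : EReal :=
  ENNReal.log (μ (ball x (Real.exp (-(n : ℝ))))) / ((-(n : ℝ) : ℝ) : EReal)

variable {X : Type*} [MetricSpace X] [MeasurableSpace X]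

lemma psi_nonneg (μ : Measure X) [IsProbabilityMeasure μ] (x : X) (n : ℕ) :
    0 ≤ psi μ x n := by
  apply EReal.div_nonneg_of_nonpos_of_nonpos
  · rw [ENNReal.log_le_zero_iff]
    exact prob_le_one
  · exact_mod_cast neg_nonpos.2 (Nat.cast_nonneg n)

lemma psi_liminf_nonneg (μ : Measure X) [IsProbabilityMeasure μ] (x : X) :
    0 ≤ liminf (psi μ x) atTop :=
  le_liminf_of_le (by isBoundedDefault) (Eventually.of_forall (psi_nonneg μ x))

lemma locDimE_eq_liminf_psi (μ : Measure X) [IsProbabilityMeasure μ] (x : X) :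
    locDimE μ x = liminf (psi μ x) atTop := by
  set φ : ℝ → EReal := fun r => ENNReal.log (μ (ball x r)) / (Real.log r : EReal) with hφ
  have hseq : Tendsto (fun n : ℕ => Real.exp (-(n : ℝ))) atTop (𝓝[>] (0:ℝ)) := by
    apply tendsto_nhdsWithin_of_tendsto_nhds_of_eventually_within
    · exact Real.tendsto_exp_atBot.comp
        (tendsto_neg_atTop_atBot.comp tendsto_natCast_atTop_atTop)
    · exact Eventually.of_forall fun n => Real.exp_pos _
  have hphi_psi : ∀ n : ℕ, φ (Real.exp (-(n : ℝ))) = psi μ x n := by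
    intro n
    simp only [hφ, psi, Real.log_exp]
  apply le_antisymm
  · calc locDimE μ x = liminf φ (𝓝[>] (0:ℝ)) := rfl
      _ ≤ liminf φ (map (fun n : ℕ => Real.exp (-(n : ℝ))) atTop) :=
          liminf_le_liminf_of_le hseq
      _ = liminf (fun n : ℕ => φ (Real.exp (-(n : ℝ)))) atTop := (liminf_comp _ _ _).symm
      _ = liminf (psi μ x) atTop := by
          apply liminf_congr
          exact Eventually.of_forall hphi_psi
  · apply le_of_forall_lt_mul_le (psi_liminf_nonneg μ x)
    intro c hc0 hc1
    obtain ⟨N₀, hN₀⟩ := exists_nat_ge (1 / (1 - c))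
    set N := max N₀ 2 with hNdef
    have hNfrac : ∀ n : ℕ, N ≤ n → c ≤ ((n:ℝ) - 1) / n := by
      intro n hn
      have hn2 : 2 ≤ n := le_trans (le_max_right _ _) hn
      have hnpos : (0:ℝ) < n := by exact_mod_cast by omega
      have hN₀n : (N₀:ℝ) ≤ n := by exact_mod_cast le_trans (le_max_left _ _) hn
      have h1c : (0:ℝ) < 1 - c := by linarith
      have : 1 / (1 - c) ≤ (n:ℝ) := le_trans hN₀ hN₀n
      rw [div_le_iff₀ h1c] at this
      rw [le_div_iff₀ hnpos]
      nlinarith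
    have hNlog : Tendsto (fun r : ℝ => ⌈-Real.log r⌉₊) (𝓝[>] (0:ℝ)) atTop :=
      tendsto_nat_ceil_atTop.comp
        (tendsto_neg_atBot_atTop.comp Real.tendsto_log_nhdsGT_zero)
    have hNr : Tendsto (fun r : ℝ => ⌈-Real.log r⌉₊ - 1) (𝓝[>] (0:ℝ)) atTop :=
      (tendsto_sub_atTop_nat 1).comp hNlog
    have hev : ∀ᶠ r in 𝓝[>] (0:ℝ),
        (c : EReal) * psi μ x (⌈-Real.log r⌉₊ - 1) ≤ φ r := by
      filter_upwards [self_mem_nhdsWithin,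
        Ioo_mem_nhdsGT_of_mem (by constructor <;> norm_num : (0:ℝ) ∈ Ico (0:ℝ) 1),
        hNlog.eventually_ge_atTop N] with r hr0 hr1 hrN
      have hr0' : (0:ℝ) < r := hr0
      have hrlt1 : r < 1 := hr1.2
      set n := ⌈-Real.log r⌉₊ with hn
      set m := n - 1 with hm
      have hn2 : 2 ≤ n := le_trans (le_max_right _ _) hrN
      have hm1 : 1 ≤ m := by omega
      have hmcast : (m:ℝ) = (n:ℝ) - 1 := by
        rw [hm, Nat.cast_sub (by omega)]
        norm_num
      have hlogneg : Real.log r < 0 := Real.log_neg hr0' hrlt1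
      have h1 : -Real.log r ≤ (n:ℝ) := Nat.le_ceil _
      have h2 : (n:ℝ) < -Real.log r + 1 := Nat.ceil_lt_add_one (by linarith)
      have hrm : r < Real.exp (-(m:ℝ)) := by
        rw [hmcast, ← Real.exp_log hr0']
        apply Real.exp_lt_exp.2
        linarith
      have hsub : ball x r ⊆ ball x (Real.exp (-(m:ℝ))) := ball_subset_ball hrm.le
      set b : EReal := ENNReal.log (μ (ball x (Real.exp (-(m:ℝ))))) with hb
      have hb0 : b ≤ 0 := by
        rw [hb, ENNReal.log_le_zero_iff]
        exact prob_le_one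
      have step1 : b / (Real.log r : EReal) ≤ φ r := by
        apply EReal.div_le_div_right_of_nonpos (by exact_mod_cast hlogneg.le)
        exact ENNReal.log_monotone (measure_mono hsub)
      have step2 : b / ((-(n:ℝ) : ℝ) : EReal) ≤ b / (Real.log r : EReal) :=
        ediv_le_ediv_denom hb0 (by linarith) hlogneg
      have hmneg : -(m:ℝ) < 0 := by
        rw [hmcast]; linarith [show (2:ℝ) ≤ (n:ℝ) from by exact_mod_cast hn2]
      have hnneg : -(n:ℝ) < 0 := by
        linarith [show (2:ℝ) ≤ (n:ℝ) from by exact_mod_cast hn2]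
      have step3 : b / ((-(n:ℝ) : ℝ) : EReal)
          = psi μ x m * (((m:ℝ) / (n:ℝ) : ℝ) : EReal) := by
        rw [ediv_eq_div_mul b hmneg hnneg, neg_div_neg_eq]
        rfl
      have hcmn : c ≤ (m:ℝ) / (n:ℝ) := by
        rw [hmcast]
        exact hNfrac n hrN
      have step4 : (c : EReal) * psi μ x m ≤ psi μ x m * (((m:ℝ) / (n:ℝ) : ℝ) : EReal) := by
        rw [EReal.mul_comm]
        exact mul_le_mul_of_nonneg_left (by exact_mod_cast hcmn) (psi_nonneg μ x m)
      calc (c : EReal) * psi μ x m ≤ psi μ x m * (((m:ℝ) / (n:ℝ) : ℝ) : EReal) := step4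
        _ = b / ((-(n:ℝ) : ℝ) : EReal) := step3.symm
        _ ≤ b / (Real.log r : EReal) := step2
        _ ≤ φ r := step1
    calc (c : EReal) * liminf (psi μ x) atTop
        = liminf (fun n => (c : EReal) * psi μ x n) atTop := (liminf_const_mul _ _ hc0).symm
      _ ≤ liminf (fun n => (c : EReal) * psi μ x n)
            (map (fun r : ℝ => ⌈-Real.log r⌉₊ - 1) (𝓝[>] (0:ℝ))) :=
          liminf_le_liminf_of_le hNr
      _ = liminf (fun r : ℝ => (c : EReal) * psi μ x (⌈-Real.log r⌉₊ - 1)) (𝓝[>] (0:ℝ)) :=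
          (liminf_comp _ _ _).symm
      _ ≤ liminf φ (𝓝[>] (0:ℝ)) := liminf_le_liminf hev
      _ = locDimE μ x := rfl

/-! ### invariance -/

lemma aux_liminf_le (a b : ℕ → EReal) (k : ℕ) (hb : ∀ n, b n ≤ 0)
    (hab : ∀ n, a (n + k) ≤ b n) :
    liminf (fun n : ℕ => b n / ((-(n:ℝ) : ℝ) : EReal)) atTop
      ≤ liminf (fun n : ℕ => a n / ((-(n:ℝ) : ℝ) : EReal)) atTop := by
  set ψb : ℕ → EReal := fun n => b n / ((-(n:ℝ) : ℝ) : EReal) with hψb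
  set ψa : ℕ → EReal := fun n => a n / ((-(n:ℝ) : ℝ) : EReal) with hψa
  have hψb0 : ∀ n, 0 ≤ ψb n := fun n =>
    EReal.div_nonneg_of_nonpos_of_nonpos (hb n)
      (by exact_mod_cast neg_nonpos.2 (Nat.cast_nonneg n))
  have hL0 : 0 ≤ liminf ψb atTop :=
    le_liminf_of_le (by isBoundedDefault) (Eventually.of_forall hψb0)
  apply le_of_forall_lt_mul_le hL0
  intro c hc0 hc1
  obtain ⟨N₀, hN₀⟩ := exists_nat_ge (c * k / (1 - c))
  have hev : ∀ᶠ n in atTop, (c : EReal) * ψb n ≤ ψa (n + k) := by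
    filter_upwards [eventually_ge_atTop (max N₀ 1)] with n hn
    have hn1 : 1 ≤ n := le_trans (le_max_right _ _) hn
    have hnN : (N₀:ℝ) ≤ n := by exact_mod_cast le_trans (le_max_left _ _) hn
    have hnpos : (0:ℝ) < n := by exact_mod_cast by omega
    have hnkpos : (0:ℝ) < (n:ℝ) + k := by positivity
    have hnneg : -(n:ℝ) < 0 := by linarith
    have hnkneg : -(((n + k : ℕ)):ℝ) < 0 := by push_cast; linarith
    have h1 : b n / ((-(((n + k : ℕ)):ℝ) : ℝ) : EReal) ≤ ψa (n + k) :=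
      EReal.div_le_div_right_of_nonpos (by exact_mod_cast hnkneg.le) (hab n)
    have h2 : b n / ((-(((n + k : ℕ)):ℝ) : ℝ) : EReal)
        = ψb n * ((((n:ℝ) / ((n:ℝ) + k)) : ℝ) : EReal) := by
      rw [ediv_eq_div_mul (b n) hnneg hnkneg, neg_div_neg_eq]
      push_cast
      rfl
    have h1c : (0:ℝ) < 1 - c := by linarith
    have hckn : c * k / (1 - c) ≤ (n:ℝ) := le_trans hN₀ hnN
    rw [div_le_iff₀ h1c] at hckn
    have h3 : c ≤ (n:ℝ) / ((n:ℝ) + k) := by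
      rw [le_div_iff₀ hnkpos]
      nlinarith
    calc (c : EReal) * ψb n = ψb n * (c : EReal) := EReal.mul_comm _ _
      _ ≤ ψb n * ((((n:ℝ) / ((n:ℝ) + k)) : ℝ) : EReal) :=
          mul_le_mul_of_nonneg_left (by exact_mod_cast h3) (hψb0 n)
      _ = b n / ((-(((n + k : ℕ)):ℝ) : ℝ) : EReal) := h2.symm
      _ ≤ ψa (n + k) := h1
  calc (c : EReal) * liminf ψb atTop
      = liminf (fun n => (c : EReal) * ψb n) atTop := (liminf_const_mul _ _ hc0).symm
    _ ≤ liminf (fun n => ψa (n + k)) atTop := liminf_le_liminf hev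
    _ = liminf ψa atTop := liminf_nat_add ψa k

lemma psi_liminf_invariant [OpensMeasurableSpace X] (μ : Measure X) [IsProbabilityMeasure μ]
    (T : X ≃ X) (K : ℝ≥0) (hK : 1 ≤ K)
    (hT : LipschitzWith K T) (hT' : LipschitzWith K T.symm)
    (hinv : ∀ A : Set X, MeasurableSet A → μ (⇑T ⁻¹' A) = μ A) (x : X) :
    liminf (psi μ (T x)) atTop = liminf (psi μ x) atTop := by
  set k := ⌈Real.log (K:ℝ)⌉₊ with hk
  have hK0 : (0:ℝ) < (K:ℝ) := by exact_mod_cast lt_of_lt_of_le one_pos hK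
  have hKexp : (K:ℝ) ≤ Real.exp (k:ℝ) := by
    rw [← Real.exp_log hK0]
    exact Real.exp_le_exp.2 (Nat.le_ceil _)
  have hexpmul : ∀ n : ℕ, (K:ℝ) * Real.exp (-(((n + k : ℕ)):ℝ)) ≤ Real.exp (-(n:ℝ)) := by
    intro n
    calc (K:ℝ) * Real.exp (-(((n + k : ℕ)):ℝ))
        ≤ Real.exp (k:ℝ) * Real.exp (-(((n + k : ℕ)):ℝ)) :=
          mul_le_mul_of_nonneg_right hKexp (Real.exp_pos _).le
      _ = Real.exp (-(n:ℝ)) := by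
          rw [← Real.exp_add]
          congr 1
          push_cast
          ring
  have hsand1 : ∀ n : ℕ,
      μ (ball x (Real.exp (-(((n + k : ℕ)):ℝ)))) ≤ μ (ball (T x) (Real.exp (-(n:ℝ)))) := by
    intro n
    conv_rhs => rw [← hinv _ measurableSet_ball]
    apply measure_mono
    intro y hy
    rw [mem_ball] at hy
    rw [mem_preimage, mem_ball]
    calc dist (T y) (T x) ≤ (K:ℝ) * dist y x := hT.dist_le_mul y x
      _ < (K:ℝ) * Real.exp (-(((n + k : ℕ)):ℝ)) := by
          exact mul_lt_mul_of_pos_left hy hK0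
      _ ≤ Real.exp (-(n:ℝ)) := hexpmul n
  have hsand2 : ∀ n : ℕ,
      μ (ball (T x) (Real.exp (-(((n + k : ℕ)):ℝ)))) ≤ μ (ball x (Real.exp (-(n:ℝ)))) := by
    intro n
    conv_lhs => rw [← hinv _ measurableSet_ball]
    apply measure_mono
    intro y hy
    rw [mem_preimage, mem_ball] at hy
    rw [mem_ball]
    have h := hT'.dist_le_mul (T y) (T x)
    simp only [Equiv.symm_apply_apply] at h
    calc dist y x ≤ (K:ℝ) * dist (T y) (T x) := h
      _ < (K:ℝ) * Real.exp (-(((n + k : ℕ)):ℝ)) := mul_lt_mul_of_pos_left hy hK0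
      _ ≤ Real.exp (-(n:ℝ)) := hexpmul n
  have hlog0 : ∀ z : X, ∀ n : ℕ, ENNReal.log (μ (ball z (Real.exp (-(n:ℝ))))) ≤ 0 := by
    intro z n
    rw [ENNReal.log_le_zero_iff]
    exact prob_le_one
  apply le_antisymm
  · exact aux_liminf_le _ _ k (hlog0 (T x)) fun n => ENNReal.log_monotone (hsand1 n)
  · exact aux_liminf_le _ _ k (hlog0 x) fun n => ENNReal.log_monotone (hsand2 n)

lemma measurable_psi [OpensMeasurableSpace X] (μ : Measure X) (n : ℕ) :
    Measurable fun x : X => psi μ x n := by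
  have h1 : Measurable fun x : X => μ (ball x (Real.exp (-(n:ℝ)))) :=
    measurable_measure_ball' μ _
  have h2 : Measurable (ENNReal.log) := ENNReal.log_monotone.measurable
  have h3 : Antitone fun y : EReal => y / ((-(n:ℝ) : ℝ) : EReal) := by
    intro y y' hyy'
    exact EReal.div_le_div_right_of_nonpos
      (by exact_mod_cast neg_nonpos.2 (Nat.cast_nonneg n)) hyy'
  exact h3.measurable.comp (h2.comp h1)

end Statement10Aux

open Statement10Aux in
/-- For a bi-Lipschitz bijection `T` of a compact metric space and a `T`-invariant
ergodic probability measure `μ`, the lower local dimension is `μ`-a.e. equal to a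
constant `c ∈ [0, +∞]`. -/
theorem statement10 {X : Type*} [MetricSpace X] [CompactSpace X]
    [MeasurableSpace X] [BorelSpace X]
    (T : X ≃ X) (K₁ K₂ : ℝ≥0)
    (hT : LipschitzWith K₁ T) (hT' : LipschitzWith K₂ T.symm)
    (μ : Measure X) [IsProbabilityMeasure μ]
    (hinv : ∀ A : Set X, MeasurableSet A → μ (⇑T ⁻¹' A) = μ A)
    (herg : ∀ A : Set X, MeasurableSet A → ⇑T ⁻¹' A = A → μ A = 0 ∨ μ A = 1) :
    ∃ c : EReal, 0 ≤ c ∧ μ {x : X | locDimE μ x = c} = 1 := by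
  classical
  set K : ℝ≥0 := 1 ⊔ (K₁ ⊔ K₂) with hKdef
  have hK1 : 1 ≤ K := le_sup_left
  have hTK : LipschitzWith K T := hT.weaken (le_sup_of_le_right le_sup_left)
  have hTK' : LipschitzWith K T.symm := hT'.weaken (le_sup_of_le_right le_sup_right)
  set f : X → EReal := fun x => liminf (psi μ x) atTop with hf
  have hfeq : ∀ x, locDimE μ x = f x := locDimE_eq_liminf_psi μ
  have hfmeas : Measurable f := Measurable.liminf fun n => measurable_psi μ n
  have hfinv : ∀ x, f (T x) = f x := fun x =>
    psi_liminf_invariant μ T K hK1 hTK hTK' hinv x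
  have hf0 : ∀ x, 0 ≤ f x := psi_liminf_nonneg μ
  set S : Set EReal := {t | μ {x | f x ≤ t} = 1} with hS
  have hStop : (⊤ : EReal) ∈ S := by
    have : {x : X | f x ≤ ⊤} = univ := by
      ext y; simp
    simp only [hS, mem_setOf_eq, this, measure_univ]
  have hSne : S.Nonempty := ⟨⊤, hStop⟩
  set c := sInf S with hc
  have hAmeas : ∀ t : EReal, MeasurableSet {x | f x ≤ t} := fun t =>
    hfmeas measurableSet_Iic
  have hAinv : ∀ t : EReal, ⇑T ⁻¹' {x | f x ≤ t} = {x | f x ≤ t} := by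
    intro t
    ext y
    simp only [mem_preimage, mem_setOf_eq, hfinv y]
  have h01 : ∀ t : EReal, μ {x | f x ≤ t} = 0 ∨ μ {x | f x ≤ t} = 1 := fun t =>
    herg _ (hAmeas t) (hAinv t)
  have hc0 : 0 ≤ c := by
    apply le_sInf
    intro t ht
    by_contra hlt
    push_neg at hlt
    have : {x : X | f x ≤ t} = ∅ := by
      ext y
      simp only [mem_setOf_eq, mem_empty_iff_false, iff_false]
      intro h
      exact absurd ((hf0 y).trans h) (not_le.2 hlt)
    rw [hS] at ht
    simp only [mem_setOf_eq, this, measure_empty] at ht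
    exact zero_ne_one ht
  obtain ⟨u, hu_anti, hu_tend, huS⟩ := exists_seq_tendsto_sInf hSne (OrderBot.bddBelow S)
  have hIle : μ {x | f x ≤ c} = 1 := by
    have hset : {x : X | f x ≤ c} = ⋂ n, {x | f x ≤ u n} := by
      ext y
      simp only [mem_setOf_eq, mem_iInter]
      constructor
      · intro h n
        exact h.trans (sInf_le (huS n))
      · intro h
        exact ge_of_tendsto' hu_tend h
    have hcompl : μ (⋃ n, {x : X | f x ≤ u n}ᶜ) = 0 :=
      measure_iUnion_null fun n => (prob_compl_eq_zero_iff (hAmeas _)).2 (huS n)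
    rw [hset]
    refine le_antisymm prob_le_one ?_
    calc (1:ℝ≥0∞) = μ univ := measure_univ.symm
      _ ≤ μ (⋂ n, {x : X | f x ≤ u n}) + μ (⋃ n, {x : X | f x ≤ u n}ᶜ) := by
          have hcover : (univ : Set X)
              ⊆ (⋂ n, {x : X | f x ≤ u n}) ∪ (⋃ n, {x : X | f x ≤ u n}ᶜ) := by
            intro y _
            by_cases hy : ∀ n, f y ≤ u n
            · exact Or.inl (mem_iInter.2 hy)
            · push_neg at hy
              obtain ⟨n, hn⟩ := hy
              exact Or.inr (mem_iUnion.2 ⟨n, by simp [mem_setOf_eq, not_le.2 hn]⟩)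
          exact le_trans (measure_mono hcover) (measure_union_le _ _)
      _ = μ (⋂ n, {x : X | f x ≤ u n}) := by rw [hcompl, add_zero]
  obtain ⟨D, hDc, hDdense⟩ := TopologicalSpace.exists_countable_dense EReal
  have hIlt : μ {x | f x < c} = 0 := by
    have hsub : {x : X | f x < c} ⊆ ⋃ q ∈ D ∩ Iio c, {x | f x ≤ q} := by
      intro y hy
      obtain ⟨m, hm1, hm2⟩ := exists_between (show f y < c from hy)
      obtain ⟨q, hqD, hq⟩ := hDdense.exists_mem_open isOpen_Ioo ⟨m, hm1, hm2⟩
      exact mem_biUnion ⟨hqD, hq.2⟩ (le_of_lt hq.1)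
    refine measure_mono_null hsub ((measure_biUnion_null_iff (hDc.mono inter_subset_left)).2 ?_)
    intro q hq
    rcases h01 q with h | h
    · exact h
    · exact absurd (sInf_le (show q ∈ S from h)) (not_le.2 (show q < c from hq.2))
  refine ⟨c, hc0, ?_⟩
  have hsetEq : {x : X | locDimE μ x = c} = {x : X | f x = c} := by
    ext y
    simp only [mem_setOf_eq, hfeq y]
  rw [hsetEq]
  have hsplit : {x : X | f x ≤ c} ⊆ {x : X | f x = c} ∪ {x : X | f x < c} := by
    intro y hy
    rcases lt_or_eq_of_le (show f y ≤ c from hy) with h | h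
    · exact Or.inr h
    · exact Or.inl h
  have hle : (1:ℝ≥0∞) ≤ μ {x : X | f x = c} := by
    calc (1:ℝ≥0∞) = μ {x : X | f x ≤ c} := hIle.symm
      _ ≤ μ ({x : X | f x = c} ∪ {x : X | f x < c}) := measure_mono hsplit
      _ ≤ μ {x : X | f x = c} + μ {x : X | f x < c} := measure_union_le _ _
      _ = μ {x : X | f x = c} := by rw [hIlt, add_zero]
  exact le_antisymm prob_le_one hle
end

section
/- For every Borel probability measure μ on ℝ with μ([0,1)) = 1, there exists at least one exponent α ≥ 0 such that L_μ(α) = α, where L_μ is the Legendre spectrum of μ. -/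
/-!
Generation by generation, `q ↦ log₂ Σ_I μ(I)^q` is convex by Hölder's inequality and vanishes
at `q = 1`; passing to the liminf, `τ_μ(q) ≤ (q - 1) τ_μ(p) / (p - 1)` whenever `q < 1 < p`.
Since at most `2^j` intervals carry mass, `τ_μ(0) ≥ -1`, so the slopes `τ_μ(p) / (p - 1)`,
`p > 1`, lie in `[0, 1]` and their supremum `α` is a supergradient of `τ_μ` at `1`: the line
`q ↦ (q - 1) α` lies above `τ_μ` and touches it at `q = 1`. So `q α - τ_μ(q) ≥ α` for every `q`,
with equality at `q = 1`, i.e. `L_μ(α) = α`.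
-/

open MeasureTheory Filter Set Metric
open scoped ENNReal NNReal Topology

/-- The dyadic interval `[k/2^j, (k+1)/2^j)`. -/
def dyadicI (j k : ℕ) : Set ℝ := Ico ((k : ℝ) / 2 ^ j) ((k + 1 : ℝ) / 2 ^ j)

/-- `Σ_{I ∈ G_j, μ I > 0} μ(I)^q` over the dyadic intervals of generation `j`. -/
noncomputable def dyadicSum (μ : Measure ℝ) (j : ℕ) (q : ℝ) : ℝ :=
  ∑ k ∈ Finset.range (2 ^ j),
    if μ (dyadicI j k) = 0 then 0 else (μ (dyadicI j k)).toReal ^ q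

/-- The sequence whose liminf defines the scaling function `τ_μ(q)`. -/
noncomputable def tauSeq (μ : Measure ℝ) (q : ℝ) (j : ℕ) : ℝ :=
  (-1 : ℝ) / j * Real.logb 2 (dyadicSum μ j q)

/-- The scaling function `τ_μ(q) = liminf_j (-1/j) log₂ Σ_{I ∈ G_j, μ I > 0} μ(I)^q`,
taken in the extended reals. -/
noncomputable def tau (μ : Measure ℝ) (q : ℝ) : EReal :=
  liminf (fun j : ℕ => (tauSeq μ q j : EReal)) atTop

/-- The Legendre spectrum `L_μ(α) = inf_{q ∈ ℝ} (qα - τ_μ(q))`, valued in the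
extended reals (`⊥` meaning that the infimum is not bounded below). -/
noncomputable def legendre (μ : Measure ℝ) (α : ℝ) : EReal :=
  ⨅ q : ℝ, ((q * α : ℝ) : EReal) - tau μ q

namespace Real

variable {ι : Type*} {s : Finset ι} {x : ι → ℝ}

theorem sum_rpow_mul_add_mul_le_rpow_sum_mul_rpow_sum (hx : ∀ i ∈ s, 0 < x i) {a b : ℝ}
    (ha : 0 < a) (hb : 0 < b) (hab : a + b = 1) (u v : ℝ) :
    ∑ i ∈ s, x i ^ (a * u + b * v) ≤ (∑ i ∈ s, x i ^ u) ^ a * (∑ i ∈ s, x i ^ v) ^ b := by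
  have hpow : ∀ c : ℝ, c ≠ 0 → ∀ w : ℝ, ∑ i ∈ s, (x i ^ (c * w)) ^ (1 / c) = ∑ i ∈ s, x i ^ w :=
    fun c hc w => Finset.sum_congr rfl fun i hi => by
      rw [← rpow_mul (hx i hi).le, mul_one_div, mul_div_cancel_left₀ w hc]
  calc ∑ i ∈ s, x i ^ (a * u + b * v) = ∑ i ∈ s, x i ^ (a * u) * x i ^ (b * v) :=
        Finset.sum_congr rfl fun i hi => rpow_add (hx i hi) _ _
    _ ≤ (∑ i ∈ s, (x i ^ (a * u)) ^ (1 / a)) ^ (1 / (1 / a)) *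
          (∑ i ∈ s, (x i ^ (b * v)) ^ (1 / b)) ^ (1 / (1 / b)) :=
        inner_le_Lp_mul_Lq_of_nonneg s (holderConjugate_one_div ha hb hab)
          (fun i hi => (rpow_pos_of_pos (hx i hi) _).le)
          (fun i hi => (rpow_pos_of_pos (hx i hi) _).le)
    _ = (∑ i ∈ s, x i ^ u) ^ a * (∑ i ∈ s, x i ^ v) ^ b := by
        rw [hpow a ha.ne', hpow b hb.ne', one_div_one_div, one_div_one_div]

section ProbabilityVector

variable (hx : ∀ i ∈ s, 0 < x i) (hs : ∑ i ∈ s, x i = 1)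
include hx hs

theorem sum_rpow_pos (q : ℝ) : 0 < ∑ i ∈ s, x i ^ q :=
  Finset.sum_pos (fun i hi => rpow_pos_of_pos (hx i hi) q)
    (Finset.nonempty_of_sum_ne_zero (hs ▸ one_ne_zero))

theorem sum_rpow_le_one_of_one_le {p : ℝ} (hp : 1 ≤ p) : ∑ i ∈ s, x i ^ p ≤ 1 := by
  refine hs ▸ Finset.sum_le_sum fun i hi => ?_
  have hx1 : x i ≤ 1 := hs ▸ Finset.single_le_sum (fun j hj => (hx j hj).le) hi
  simpa using rpow_le_rpow_of_exponent_ge (hx i hi) hx1 hp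

theorem mul_log_sum_rpow_add_mul_log_sum_rpow_nonneg {p q : ℝ} (hq : q < 1) (hp : 1 < p) :
    0 ≤ (p - 1) * log (∑ i ∈ s, x i ^ q) + (1 - q) * log (∑ i ∈ s, x i ^ p) := by
  have hpq : 0 < p - q := by linarith
  set a := (p - 1) / (p - q)
  set b := (1 - q) / (p - q)
  have hab : a + b = 1 := by simp only [a, b]; field_simp; ring
  have hexp : a * q + b * p = 1 := by simp only [a, b]; field_simp; ring
  -- `1 = a q + b p`, so Hölder bounds `Σ x_i = 1` by `(Σ x_i^q)^a (Σ x_i^p)^b`.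
  have hholder := sum_rpow_mul_add_mul_le_rpow_sum_mul_rpow_sum hx (a := a) (b := b)
    (by positivity [sub_pos.2 hp]) (by positivity [sub_pos.2 hq]) hab q p
  simp only [hexp, rpow_one, hs] at hholder
  have hlog := log_nonneg hholder
  rw [log_mul (rpow_pos_of_pos (sum_rpow_pos hx hs q) a).ne'
    (rpow_pos_of_pos (sum_rpow_pos hx hs p) b).ne', log_rpow (sum_rpow_pos hx hs q),
    log_rpow (sum_rpow_pos hx hs p)] at hlog
  calc (0 : ℝ) ≤ (p - q) * (a * log (∑ i ∈ s, x i ^ q) + b * log (∑ i ∈ s, x i ^ p)) :=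
        mul_nonneg hpq.le hlog
    _ = _ := by simp only [a, b]; field_simp

end ProbabilityVector

end Real

theorem dyadicI_subset_Ico {j k : ℕ} (hk : k < 2 ^ j) : dyadicI j k ⊆ Ico 0 1 := by
  refine Ico_subset_Ico (by positivity) ((div_le_one (by positivity)).2 ?_)
  exact_mod_cast hk

theorem biUnion_dyadicI (j : ℕ) : ⋃ k ∈ Finset.range (2 ^ j), dyadicI j k = Ico 0 1 := by
  refine Subset.antisymm (iUnion₂_subset fun k hk => dyadicI_subset_Ico (Finset.mem_range.1 hk)) ?_
  simpa [dyadicI] using Ico_subset_biUnion_Ico (2 ^ j) fun k : ℕ => (k : ℝ) / 2 ^ j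

theorem pairwise_disjoint_dyadicI (j : ℕ) : Pairwise (Function.onFun Disjoint (dyadicI j)) := by
  have hmono : Monotone fun k : ℕ => (k : ℝ) / 2 ^ j := fun _ _ hab =>
    div_le_div_of_nonneg_right (by exact_mod_cast hab) (by positivity)
  have h := hmono.pairwise_disjoint_on_Ico_succ
  simp only [Order.succ_eq_add_one, Nat.cast_add, Nat.cast_one] at h
  exact h

theorem sum_measure_dyadicI (μ : Measure ℝ) (j : ℕ) :
    ∑ k ∈ Finset.range (2 ^ j), μ (dyadicI j k) = μ (Ico 0 1) := by
  rw [← biUnion_dyadicI j]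
  exact (measure_biUnion_finset ((pairwise_disjoint_dyadicI j).set_pairwise _)
    fun _ _ => measurableSet_Ico).symm

noncomputable def dyadicSupport (μ : Measure ℝ) (j : ℕ) : Finset ℕ :=
  {k ∈ Finset.range (2 ^ j) | μ (dyadicI j k) ≠ 0}

theorem dyadicSum_eq_sum_dyadicSupport (μ : Measure ℝ) (j : ℕ) (q : ℝ) :
    dyadicSum μ j q = ∑ k ∈ dyadicSupport μ j, (μ (dyadicI j k)).toReal ^ q := by
  simp only [dyadicSum, dyadicSupport, Finset.sum_filter, ne_eq, ite_not]

section UnitMass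

variable {μ : Measure ℝ} (hμ : μ (Ico 0 1) = 1)
include hμ

theorem measure_dyadicI_ne_top {j k : ℕ} (hk : k < 2 ^ j) : μ (dyadicI j k) ≠ ⊤ :=
  ((measure_mono (dyadicI_subset_Ico hk)).trans_lt (hμ ▸ ENNReal.one_lt_top)).ne

theorem toReal_measure_dyadicI_pos {j k : ℕ} (hk : k ∈ dyadicSupport μ j) :
    0 < (μ (dyadicI j k)).toReal := by
  rw [dyadicSupport, Finset.mem_filter, Finset.mem_range] at hk
  exact ENNReal.toReal_pos hk.2 (measure_dyadicI_ne_top hμ hk.1)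

theorem sum_dyadicSupport_toReal_measure (j : ℕ) :
    ∑ k ∈ dyadicSupport μ j, (μ (dyadicI j k)).toReal = 1 := by
  rw [dyadicSupport, Finset.sum_filter_of_ne (p := fun k => μ (dyadicI j k) ≠ 0)
    fun k _ h hk => h (by simp [hk]),
    ← ENNReal.toReal_sum fun k hk => measure_dyadicI_ne_top hμ (Finset.mem_range.1 hk),
    sum_measure_dyadicI, hμ, ENNReal.toReal_one]

theorem tauSeq_one (j : ℕ) : tauSeq μ 1 j = 0 := by
  rw [tauSeq, dyadicSum_eq_sum_dyadicSupport]
  simp only [Real.rpow_one, sum_dyadicSupport_toReal_measure hμ, Real.logb_one, mul_zero]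

theorem tauSeq_nonneg {p : ℝ} (hp : 1 ≤ p) (j : ℕ) : 0 ≤ tauSeq μ p j := by
  have hx := fun k (hk : k ∈ dyadicSupport μ j) => toReal_measure_dyadicI_pos hμ hk
  have hs := sum_dyadicSupport_toReal_measure hμ j
  rw [tauSeq, dyadicSum_eq_sum_dyadicSupport]
  refine mul_nonneg_of_nonpos_of_nonpos (by rw [neg_div]; exact neg_nonpos.2 (by positivity)) ?_
  exact Real.logb_nonpos one_lt_two (Real.sum_rpow_pos hx hs p).le
    (Real.sum_rpow_le_one_of_one_le hx hs hp)

theorem neg_one_le_tauSeq_zero (j : ℕ) : -1 ≤ tauSeq μ 0 j := by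
  rcases j.eq_zero_or_pos with rfl | hj
  · simp [tauSeq]
  have hpos : 0 < dyadicSum μ j 0 := by
    rw [dyadicSum_eq_sum_dyadicSupport]
    exact Real.sum_rpow_pos (fun k hk => toReal_measure_dyadicI_pos hμ hk)
      (sum_dyadicSupport_toReal_measure hμ j) 0
  have hcard : dyadicSum μ j 0 ≤ 2 ^ j := by
    rw [dyadicSum_eq_sum_dyadicSupport]
    simp only [Real.rpow_zero, Finset.sum_const, nsmul_eq_mul, mul_one]
    exact_mod_cast (Finset.card_filter_le _ _).trans (Finset.card_range _).le
  have hlog : Real.logb 2 (dyadicSum μ j 0) ≤ j :=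
    calc Real.logb 2 (dyadicSum μ j 0) ≤ Real.logb 2 (2 ^ j) :=
          Real.logb_le_logb_of_le one_lt_two hpos hcard
      _ = j := by simp [Real.logb_pow]
  rw [tauSeq, div_mul_eq_mul_div, neg_one_mul, neg_div, neg_le_neg_iff,
    div_le_one (by positivity)]
  exact hlog

theorem sub_one_mul_tauSeq_le {p q : ℝ} (hq : q < 1) (hp : 1 < p) (j : ℕ) :
    (p - 1) * tauSeq μ q j ≤ (q - 1) * tauSeq μ p j := by
  have h := Real.mul_log_sum_rpow_add_mul_log_sum_rpow_nonneg
    (fun k hk => toReal_measure_dyadicI_pos hμ hk) (sum_dyadicSupport_toReal_measure hμ j) hq hp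
  rw [← dyadicSum_eq_sum_dyadicSupport, ← dyadicSum_eq_sum_dyadicSupport] at h
  have hj : 0 ≤ 1 / (j * Real.log 2) := by positivity
  have key : (q - 1) * tauSeq μ p j - (p - 1) * tauSeq μ q j = 1 / (j * Real.log 2) *
      ((p - 1) * Real.log (dyadicSum μ j q) + (1 - q) * Real.log (dyadicSum μ j p)) := by
    simp only [tauSeq, Real.logb]
    ring
  linarith [mul_nonneg hj h]

theorem tauSeq_le_sub_one {p : ℝ} (hp : 1 < p) (j : ℕ) : tauSeq μ p j ≤ p - 1 := by
  have h := sub_one_mul_tauSeq_le hμ zero_lt_one hp j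
  have h0 := mul_nonneg (sub_pos.2 hp).le (neg_le_iff_add_nonneg.1 (neg_one_le_tauSeq_zero hμ j))
  linarith

end UnitMass

section LiminfEReal

variable {β : Type*} {f : Filter β} [NeBot f]

theorem exists_liminf_coe_eq_of_mem_Icc {u : β → ℝ} {a b : ℝ} (h : ∀ x, u x ∈ Icc a b) :
    ∃ t ∈ Icc a b, liminf (fun x => (u x : EReal)) f = t := by
  have ha : (a : EReal) ≤ liminf (fun x => (u x : EReal)) f :=
    le_liminf_of_le (by isBoundedDefault) (Eventually.of_forall fun x => by
      exact_mod_cast (h x).1)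
  have hb : liminf (fun x => (u x : EReal)) f ≤ b :=
    liminf_le_of_frequently_le' (Frequently.of_forall fun x => by exact_mod_cast (h x).2)
  generalize liminf (fun x => (u x : EReal)) f = L at ha hb
  induction L using EReal.rec with
  | bot => simp at ha
  | coe t => exact ⟨t, ⟨by exact_mod_cast ha, by exact_mod_cast hb⟩, rfl⟩
  | top => simp at hb

theorem liminf_coe_le_of_mul_le_mul {u v : β → ℝ} {a b σ : ℝ} (ha : 0 < a) (hb : b < 0)
    (h : ∀ x, a * u x ≤ b * v x) (hv : liminf (fun x => (v x : EReal)) f = (a * σ : ℝ)) :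
    liminf (fun x => (u x : EReal)) f ≤ (b * σ : ℝ) := by
  refine EReal.le_of_forall_lt_iff_le.1 fun z hz => ?_
  have hzσ : z / b < σ := (div_lt_iff_of_neg hb).2 (by rw [mul_comm]; exact_mod_cast hz)
  have hlt : ((a * (z / b) : ℝ) : EReal) < liminf (fun x => (v x : EReal)) f := by
    rw [hv]
    exact_mod_cast mul_lt_mul_of_pos_left hzσ ha
  refine liminf_le_of_frequently_le'
    ((eventually_lt_of_lt_liminf hlt).mono fun x hx => ?_).frequently
  have hvx : a * (z / b) < v x := by exact_mod_cast hx
  have hbv : b * v x < a * z := by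
    calc b * v x < b * (a * (z / b)) := mul_lt_mul_of_neg_left hvx hb
      _ = a * z := by rw [mul_left_comm, mul_div_cancel₀ z hb.ne]
  exact_mod_cast (lt_of_mul_lt_mul_left ((h x).trans_lt hbv) ha.le).le

end LiminfEReal

theorem iInf_coe_mul_sub_eq_of_le_sub_one_mul {τ : ℝ → EReal} {α : ℝ} (h1 : τ 1 = 0)
    (hα : ∀ q, τ q ≤ ((q - 1) * α : ℝ)) :
    ⨅ q : ℝ, ((q * α : ℝ) : EReal) - τ q = α := by
  refine le_antisymm ?_ (le_iInf fun q => ?_)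
  · simpa [h1] using iInf_le (fun q : ℝ => ((q * α : ℝ) : EReal) - τ q) 1
  · calc (α : EReal) = ((q * α : ℝ) : EReal) - ((q - 1) * α : ℝ) := by
          rw [← EReal.coe_sub]
          ring_nf
      _ ≤ ((q * α : ℝ) : EReal) - τ q := EReal.sub_le_sub le_rfl (hα q)

theorem exists_nonneg_forall_le_sub_one_mul {τ : ℝ → EReal} (h1 : τ 1 = 0)
    (hfin : ∀ p > 1, ∃ σ ∈ Icc (0 : ℝ) 1, τ p = ((p - 1) * σ : ℝ))
    (hconc : ∀ q < 1, ∀ p > 1, ∀ σ : ℝ, τ p = ((p - 1) * σ : ℝ) → τ q ≤ ((q - 1) * σ : ℝ)) :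
    ∃ α : ℝ, 0 ≤ α ∧ ∀ q, τ q ≤ ((q - 1) * α : ℝ) := by
  choose σ hσ hτσ using hfin
  set α := ⨆ p : Ioi (1 : ℝ), σ p p.2
  have hbdd : BddAbove (range fun p : Ioi (1 : ℝ) => σ p p.2) :=
    ⟨1, forall_mem_range.2 fun p => (hσ p p.2).2⟩
  have hle : ∀ p (hp : 1 < p), σ p hp ≤ α := fun p hp => le_ciSup hbdd ⟨p, hp⟩
  refine ⟨α, (hσ 2 one_lt_two).1.trans (hle 2 one_lt_two), fun q => ?_⟩
  rcases lt_trichotomy q 1 with hq | rfl | hq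
  · refine EReal.le_of_forall_lt_iff_le.1 fun z hz => ?_
    have hzα : z / (q - 1) < α :=
      (div_lt_iff_of_neg (by linarith)).2 (by rw [mul_comm]; exact_mod_cast hz)
    obtain ⟨⟨p, hp⟩, hpz⟩ := exists_lt_of_lt_ciSup hzα
    calc τ q ≤ ((q - 1) * σ p hp : ℝ) := hconc q hq p hp _ (hτσ p hp)
      _ ≤ z := by
        rw [div_lt_iff_of_neg (by linarith)] at hpz
        exact_mod_cast (mul_comm (q - 1) _ ▸ hpz).le
  · simp [h1]
  · rw [hτσ q hq]
    exact_mod_cast mul_le_mul_of_nonneg_left (hle q hq) (by linarith)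

section Tau

variable {μ : Measure ℝ} (hμ : μ (Ico 0 1) = 1)
include hμ

theorem tau_one : tau μ 1 = 0 := by
  simp [tau, tauSeq_one hμ]

theorem exists_tau_eq_of_one_lt {p : ℝ} (hp : 1 < p) :
    ∃ σ ∈ Icc (0 : ℝ) 1, tau μ p = ((p - 1) * σ : ℝ) := by
  obtain ⟨t, ⟨ht0, ht1⟩, ht⟩ := exists_liminf_coe_eq_of_mem_Icc (f := atTop)
    fun j => ⟨tauSeq_nonneg hμ hp.le j, tauSeq_le_sub_one hμ hp j⟩
  have hp1 : 0 < p - 1 := sub_pos.2 hp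
  refine ⟨t / (p - 1), ⟨div_nonneg ht0 hp1.le, (div_le_one hp1).2 ht1⟩, ?_⟩
  rw [tau, ht, mul_div_cancel₀ t hp1.ne']

theorem tau_le_of_tau_eq {p q σ : ℝ} (hq : q < 1) (hp : 1 < p)
    (hσ : tau μ p = ((p - 1) * σ : ℝ)) : tau μ q ≤ ((q - 1) * σ : ℝ) :=
  liminf_coe_le_of_mul_le_mul (sub_pos.2 hp) (sub_neg.2 hq) (sub_one_mul_tauSeq_le hμ hq hp) hσ

end Tau

theorem statement14_general (μ : Measure ℝ)
    (hμ : μ (Set.Ico 0 1) = 1) :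
    ∃ α : ℝ, 0 ≤ α ∧ legendre μ α = (α : EReal) := by
  obtain ⟨α, hα0, hα⟩ := exists_nonneg_forall_le_sub_one_mul (tau_one hμ)
    (fun p hp => exists_tau_eq_of_one_lt hμ hp) (fun q hq p hp σ => tau_le_of_tau_eq hμ hq hp)
  exact ⟨α, hα0, iInf_coe_mul_sub_eq_of_le_sub_one_mul (tau_one hμ) hα⟩

/-- For every Borel probability measure `μ` on `ℝ` with `μ([0,1)) = 1` there is at
least one exponent `α ≥ 0` with `L_μ(α) = α`. -/
theorem statement14 (μ : Measure ℝ) [IsProbabilityMeasure μ]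
    (hμ : μ (Set.Ico 0 1) = 1) :
    ∃ α : ℝ, 0 ≤ α ∧ legendre μ α = (α : EReal) :=
  statement14_general μ hμ
end
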